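/- Let μ be a finite nonzero Borel measure on ℝ^{d_in} with compact support 𝔻 and a continuous Lebesgue density h : ℝ^{d_in} → [0,∞), and assume that for every hyperplane H ⊆ ℝ^{d_in} intersecting the interior of the convex hull of 𝔻 there exists x ∈ H with h(x) > 0. Then μ is a nice measure: every hyperplane has μ-measure zero, and for every open half-space A with μ(A) > 0 and μ((Ā)ᶜ) > 0 the set of ∂A-regular points cannot be covered by finitely many hyperplanes different from ∂A. -/

import Mathlib

noncomputable section

open MeasureTheory Set Filter Topology ENNReal

abbrev Euc (din : ℕ) : Type := EuclideanSpace ℝ (Fin din)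

def dot {din : ℕ} (w x : Euc din) : ℝ := ∑ i, w i * x i

abbrev Params (din d : ℕ) : Type :=
  (Fin (d + 1) → Euc din) × (Fin d → ℝ) × (Fin (d + 1) → ℝ)

def response {din d : ℕ} (W : Params din d) (x : Euc din) : ℝ :=
  dot (W.1 0) x + W.2.2 0 +
    ∑ j : Fin d, W.2.1 j * max (dot (W.1 j.succ) x + W.2.2 j.succ) 0

def mSupport {din : ℕ} (μ : Measure (Euc din)) : Set (Euc din) :=
  {x | ∀ U : Set (Euc din), IsOpen U → x ∈ U → 0 < μ U}

def GenRespDimLE (din d : ℕ) (R : Euc din → ℝ) : Prop :=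
  ∃ (K : ℕ) (ν : Fin K → Euc din) (o : Fin K → ℝ) (m : Fin K → ℕ)
    (a : Euc din →ᵃ[ℝ] ℝ) (δ : Fin K → Euc din) (b : Fin K → ℝ),
    (∀ k, ν k ≠ 0) ∧
    (∀ k l : Fin K, k ≠ l →
      {x : Euc din | dot (ν k) x = o k} ≠ {x : Euc din | dot (ν l) x = o l}) ∧
    (∀ k, m k = 1 ∨ m k = 2) ∧
    (∑ k, m k) ≤ d ∧
    (∀ k, m k = 1 →
      {x : Euc din | dot (ν k) x = o k} ⊆ {x : Euc din | dot (δ k) x + b k = 0}) ∧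
    (∀ x, R x = a x + ∑ k, {y : Euc din | o k < dot (ν k) y}.indicator
        (fun y => dot (δ k) y + b k) x)

def IsGenResp (din : ℕ) (R : Euc din → ℝ) : Prop := ∃ d, GenRespDimLE din d R

def IsSimpleGenResp (din : ℕ) (R : Euc din → ℝ) : Prop :=
  IsGenResp din R ∧ Continuous R

def GenRespStrict (din d : ℕ) (R : Euc din → ℝ) : Prop :=
  GenRespDimLE din d R ∧ (GenRespDimLE din (d - 1) R ∨ ¬ Continuous R)

def regularPts {din : ℕ} (μ : Measure (Euc din)) (n : Euc din) (c : ℝ) : Set (Euc din) :=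
  {x | dot n x = c ∧
    (∀ U : Set (Euc din), IsOpen U → x ∈ U → 0 < μ (U ∩ {y | c < dot n y})) ∧
    (∀ U : Set (Euc din), IsOpen U → x ∈ U → 0 < μ (U ∩ {y | dot n y < c}))}

def NiceMeasure {din : ℕ} (μ : Measure (Euc din)) : Prop :=
  (∀ n : Euc din, n ≠ 0 → ∀ c : ℝ, μ {x | dot n x = c} = 0) ∧
  (∀ n : Euc din, n ≠ 0 → ∀ c : ℝ,
    0 < μ {x | c < dot n x} → 0 < μ {x | dot n x < c} →
    ¬ ∃ (m : ℕ) (ns : Fin m → Euc din) (cs : Fin m → ℝ),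
      (∀ i, ns i ≠ 0) ∧
      (∀ i, {x : Euc din | dot (ns i) x = cs i} ≠ {x : Euc din | dot n x = c}) ∧
      regularPts μ n c ⊆ ⋃ i, {x : Euc din | dot (ns i) x = cs i})

/-!
A hyperplane `H` that splits `μ` into two parts of positive mass must cross the interior of the
convex hull of the support, because the boundary of a convex set is Lebesgue-null. By hypothesis
the density is then positive at some point of `H`, hence on a relatively open piece of `H`, and
every point of that piece is `H`-regular. A relatively open piece of `H` cannot be covered by
finitely many other hyperplanes: a line in `H` transverse to all of them meets each in at most
one point.
-/

open scoped RealInnerProductSpace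

lemma dot_eq_inner {din : ℕ} (w x : Euc din) : dot w x = ⟪w, x⟫ := by
  simp [dot, PiLp.inner_apply, mul_comm]

lemma mSupport_eq_support {din : ℕ} (μ : Measure (Euc din)) : mSupport μ = μ.support := by
  simp only [mSupport, Measure.support_eq_forall_isOpen]
  grind

section InnerProductSpace

variable {E : Type*} [NormedAddCommGroup E] [InnerProductSpace ℝ E]

theorem Submodule.exists_mem_orthogonal_forall_inner_ne_zero {ι : Type*} [Finite ι]
    (K : Submodule ℝ E) [K.HasOrthogonalProjection] (w : ι → E) :
    ∃ v ∈ Kᗮ, ∀ i, w i ∉ K → ⟪w i, v⟫ ≠ 0 := by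
  by_contra! hcon
  let p : {i // w i ∉ K} → Subspace ℝ Kᗮ := fun i => (ℝ ∙ w i)ᗮ.comap Kᗮ.subtype
  obtain ⟨⟨i, hiK⟩, hi⟩ := Subspace.exists_eq_top_of_iUnion_eq_univ (p := p) <| by
    refine eq_univ_of_forall fun v => ?_
    obtain ⟨i, hiK, hi⟩ := hcon v v.2
    exact mem_iUnion.mpr ⟨⟨i, hiK⟩, Submodule.mem_orthogonal_singleton_iff_inner_right.mpr hi⟩
  refine hiK ?_
  rw [← K.orthogonal_orthogonal, Submodule.mem_orthogonal]
  intro v hv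
  have : (⟨v, hv⟩ : Kᗮ) ∈ p ⟨i, hiK⟩ := hi ▸ Submodule.mem_top
  rw [real_inner_comm]
  exact Submodule.mem_orthogonal_singleton_iff_inner_right.mp this

lemma setOf_inner_smul_eq_mul {n : E} {l : ℝ} (hl : l ≠ 0) (c : ℝ) :
    {x : E | ⟪l • n, x⟫ = l * c} = {x | ⟪n, x⟫ = c} := by
  ext x
  simp [real_inner_smul_left, hl]

theorem not_subset_iUnion_setOf_inner_eq {ι : Type*} [Finite ι] {n x₀ : E} {c : ℝ} {U : Set E}
    (hU : IsOpen U) (hx₀U : x₀ ∈ U) (hx₀ : ⟪n, x₀⟫ = c) (w : ι → E) (b : ι → ℝ)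
    (hw : ∀ i, w i ≠ 0) (hne : ∀ i, {x | ⟪w i, x⟫ = b i} ≠ {x | ⟪n, x⟫ = c}) :
    ¬ {x | ⟪n, x⟫ = c} ∩ U ⊆ ⋃ i, {x | ⟪w i, x⟫ = b i} := by
  intro hcover
  obtain ⟨v, hv, hvw⟩ := (ℝ ∙ n).exists_mem_orthogonal_forall_inner_ne_zero w
  have hline : ∀ t : ℝ, ⟪n, x₀ + t • v⟫ = c := fun t => by
    rw [inner_add_right, inner_smul_right,
      Submodule.mem_orthogonal_singleton_iff_inner_right.mp hv, mul_zero, add_zero, hx₀]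
  have hT : {t : ℝ | x₀ + t • v ∈ U}.Infinite := by
    refine infinite_of_mem_nhds 0 (IsOpen.mem_nhds ?_ (by simpa using hx₀U))
    exact hU.preimage (continuous_const.add (continuous_id.smul continuous_const))
  refine hT (Finite.subset (finite_iUnion fun i =>
    Subsingleton.finite (s := {t : ℝ | ⟪w i, x₀ + t • v⟫ = b i}) ?_)
    fun t ht => by
      obtain ⟨i, hi⟩ := mem_iUnion.mp (hcover ⟨hline t, ht⟩)
      exact mem_iUnion.mpr ⟨i, hi⟩)
  intro t ht s hs
  simp only [mem_ofPred_eq, inner_add_right, inner_smul_right] at ht hs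
  by_cases hwn : w i ∈ ℝ ∙ n
  · -- a hyperplane parallel to `H` that meets the line, which lies in `H`, is `H` itself
    obtain ⟨l, hl⟩ := Submodule.mem_span_singleton.mp hwn
    have hl0 : l ≠ 0 := by rintro rfl; exact hw i (by simp [← hl])
    refine absurd ?_ (hne i)
    have hb : b i = l * c := by
      rw [← ht, ← hl, ← inner_smul_right, ← inner_add_right, real_inner_smul_left, hline]
    rw [← hl, hb, setOf_inner_smul_eq_mul hl0]
  · exact mul_right_cancel₀ (hvw i hwn) (by linarith)

lemma mem_closure_setOf_inner_lt {n : E} (hn : n ≠ 0) (x : E) :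
    x ∈ closure {y | ⟪n, x⟫ < ⟪n, y⟫} := by
  have hcont : Tendsto (fun t : ℝ => x + t • n) (𝓝[>] 0) (𝓝 x) :=
    ((continuous_const.add (continuous_id.smul continuous_const)).tendsto' 0 x
      (by simp)).mono_left nhdsWithin_le_nhds
  refine mem_closure_of_tendsto hcont (eventually_nhdsWithin_of_forall fun t ht => ?_)
  have : 0 < t * ⟪n, n⟫ := mul_pos ht (real_inner_self_pos.mpr hn)
  simp only [mem_ofPred_eq, inner_add_right, inner_smul_right]
  linarith

end InnerProductSpace

section Measure

lemma withDensity_ofReal_pos_of_mem_closure {X : Type*} [TopologicalSpace X] [MeasurableSpace X]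
    [OpensMeasurableSpace X] (ν : Measure X) [ν.IsOpenPosMeasure] {h : X → ℝ}
    (hh : Continuous h) {O : Set X} (hO : IsOpen O) {x : X} (hx : x ∈ closure O)
    (hpos : 0 < h x) : 0 < ν.withDensity (fun y => ENNReal.ofReal (h y)) O := by
  have hpos_open : IsOpen {y | 0 < h y} := isOpen_lt continuous_const hh
  rw [pos_iff_ne_zero, Ne, withDensity_apply_eq_zero' hh.measurable.ennreal_ofReal.aemeasurable]
  simp only [ne_eq, ENNReal.ofReal_eq_zero, not_le]
  exact (hpos_open.inter hO).measure_ne_zero ν (mem_closure_iff.mp hx _ hpos_open hpos)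

variable {E : Type*} [NormedAddCommGroup E] [InnerProductSpace ℝ E] [FiniteDimensional ℝ E]
  [MeasurableSpace E] [BorelSpace E]

lemma MeasureTheory.Measure.addHaar_setOf_inner_eq (μ : Measure E) [μ.IsAddHaarMeasure]
    {n : E} (hn : n ≠ 0) (c : ℝ) : μ {x | ⟪n, x⟫ = c} = 0 := by
  let H : AffineSubspace ℝ E := (AffineSubspace.mk' c ⊥).comap (innerₛₗ ℝ n).toAffineMap
  have hH : (H : Set E) = {x | ⟪n, x⟫ = c} := by ext x; simp [H, sub_eq_zero]
  refine hH ▸ Measure.addHaar_affineSubspace μ H fun htop => hn ?_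
  have h0 : (0 : E) ∈ H := htop ▸ AffineSubspace.mem_top ℝ E 0
  have hn' : n ∈ H := htop ▸ AffineSubspace.mem_top ℝ E n
  rw [← SetLike.mem_coe, hH] at h0 hn'
  simp only [mem_ofPred_eq, inner_zero_right] at h0 hn'
  exact inner_self_eq_zero.mp (hn'.trans h0.symm)

lemma nonempty_inter_interior_of_measure_ne_zero {μ ν : Measure E} [ν.IsAddHaarMeasure]
    (hμν : μ ≪ ν) {C : Set E} (hC : Convex ℝ C) (hCμ : μ Cᶜ = 0) {S : Set E} (hS : μ S ≠ 0) :
    (S ∩ interior C).Nonempty := by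
  have hint : μ (interior C)ᶜ = 0 := by
    refine measure_mono_null (fun x hx => ?_)
      (measure_union_null hCμ (hμν (hC.addHaar_frontier ν)))
    by_cases hxC : x ∈ C
    · exact Or.inr ⟨subset_closure hxC, hx⟩
    · exact Or.inl hxC
  exact nonempty_of_measure_ne_zero (by rwa [measure_inter_conull hint])

end Measure

lemma mem_regularPts_of_pos {din : ℕ} (ν : Measure (Euc din)) [ν.IsOpenPosMeasure]
    {h : Euc din → ℝ} (hh : Continuous h) {n : Euc din} (hn : n ≠ 0) {c : ℝ} {x : Euc din}
    (hx : dot n x = c) (hpos : 0 < h x) :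
    x ∈ regularPts (ν.withDensity fun y => ENNReal.ofReal (h y)) n c := by
  simp only [regularPts, dot_eq_inner] at hx ⊢
  have hinner : Continuous fun y : Euc din => ⟪n, y⟫ := continuous_const.inner continuous_id
  have hx_gt : x ∈ closure {y | c < ⟪n, y⟫} := hx ▸ mem_closure_setOf_inner_lt hn x
  have hx_lt : x ∈ closure {y | ⟪n, y⟫ < c} := by
    simpa only [inner_neg_left, neg_lt_neg_iff, hx] using
      mem_closure_setOf_inner_lt (neg_ne_zero.mpr hn) x
  refine ⟨hx, fun U hU hxU => ?_, fun U hU hxU => ?_⟩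
  · exact withDensity_ofReal_pos_of_mem_closure ν hh
      (hU.inter (isOpen_lt continuous_const hinner)) (hU.inter_closure ⟨hxU, hx_gt⟩) hpos
  · exact withDensity_ofReal_pos_of_mem_closure ν hh
      (hU.inter (isOpen_lt hinner continuous_const)) (hU.inter_closure ⟨hxU, hx_lt⟩) hpos

theorem measure_is_nice_general
    (din : ℕ)
    (μ : Measure (Euc din))
    (h : Euc din → ℝ) (hh : Continuous h)
    (hμ : μ = volume.withDensity fun x => ENNReal.ofReal (h x))
    (D : Set (Euc din)) (hD : D = mSupport μ)
    (hplane : ∀ n : Euc din, n ≠ 0 → ∀ c : ℝ,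
      ({x : Euc din | dot n x = c} ∩ interior (convexHull ℝ D)).Nonempty →
      ∃ x : Euc din, dot n x = c ∧ 0 < h x) :
    NiceMeasure μ := by
  have hac : μ ≪ volume := hμ ▸ withDensity_absolutelyContinuous _ _
  have hhull : μ (convexHull ℝ D)ᶜ = 0 := measure_mono_null
    (compl_subset_compl.mpr (subset_convexHull ℝ D)) (by simp [hD, mSupport_eq_support])
  refine ⟨fun n hn c => hac (by simpa only [dot_eq_inner] using
    Measure.addHaar_setOf_inner_eq volume hn c), ?_⟩
  rintro n hn c hA hB ⟨m, w, b, hw, hne, hcover⟩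
  obtain ⟨a, ha, haG⟩ := nonempty_inter_interior_of_measure_ne_zero hac (convex_convexHull ℝ D)
    hhull hA.ne'
  obtain ⟨a', ha', ha'G⟩ := nonempty_inter_interior_of_measure_ne_zero hac
    (convex_convexHull ℝ D) hhull hB.ne'
  simp only [dot_eq_inner] at hplane ha ha' hne hcover
  obtain ⟨z, hzG, hz⟩ := (convex_convexHull ℝ D).interior.isPreconnected.intermediate_value
    (f := fun x => ⟪n, x⟫) ha'G haG (continuous_const.inner continuous_id).continuousOn
    ⟨le_of_lt ha', le_of_lt ha⟩
  obtain ⟨x₀, hx₀, hpos⟩ := hplane n hn c ⟨z, hz, hzG⟩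
  refine not_subset_iUnion_setOf_inner_eq (isOpen_lt continuous_const hh) hpos hx₀ w b hw hne
    fun x hx => hcover ?_
  subst hμ
  exact mem_regularPts_of_pos volume hh hn ((dot_eq_inner n x).trans hx.1) hx.2

/-- the measure `μ` of the main theorem is a nice measure: every
hyperplane has `μ`-measure zero, and for every open half-space `A` with
`μ(A) > 0` and `μ((Ā)ᶜ) > 0` the set of `∂A`-regular points cannot be covered by
finitely many hyperplanes different from `∂A`. -/
theorem measure_is_nice
    (din : ℕ) (hdin : 0 < din)
    (μ : Measure (Euc din)) [IsFiniteMeasure μ] (hμ0 : μ ≠ 0)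
    (h : Euc din → ℝ) (hh : Continuous h) (hh0 : ∀ x, 0 ≤ h x)
    (hμ : μ = volume.withDensity fun x => ENNReal.ofReal (h x))
    (D : Set (Euc din)) (hD : D = mSupport μ) (hDc : IsCompact D)
    (hplane : ∀ n : Euc din, n ≠ 0 → ∀ c : ℝ,
      ({x : Euc din | dot n x = c} ∩ interior (convexHull ℝ D)).Nonempty →
      ∃ x : Euc din, dot n x = c ∧ 0 < h x) :
    NiceMeasure μ :=
  measure_is_nice_general din μ h hh hμ D hD hplane
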